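/- arXiv:2111.07070 — 2 statements merged into one kernel-verified Lean document; each statement's English description precedes it below -/
import Mathlib

section
/- Let Q and Q' be generator matrices of two irreducible finite-state continuous-time Markov chains on the same finite state space with stationary distributions π and π' respectively (row vectors with π Q = 0, π' Q' = 0, π 1 = π' 1 = 1). Let f, f' be reward vectors and set η = π f, η' = π' f'. If g is any vector satisfying the Poisson equation Q g = η·1 − f, then η' − η = π' [(Q' − Q) g + (f' − f)]. -/
open Finset

/-- A matrix is the generator of an irreducible CTMC: nonnegative off-diagonal
entries, zero row sums, and from every nonempty proper subset of states there
is a positive rate out of it. -/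
def IsIrreducibleGenerator {n : ℕ} (Q : Matrix (Fin n) (Fin n) ℝ) : Prop :=
  (∀ i j, i ≠ j → 0 ≤ Q i j) ∧ (∀ i, ∑ j, Q i j = 0) ∧
  (∀ S : Finset (Fin n), S.Nonempty → S ≠ Finset.univ →
    ∃ i ∈ S, ∃ j ∉ S, 0 < Q i j)

/-- Performance difference equation: for two irreducible generators `Q, Q'` with
stationary distributions `π, π'`, rewards `f, f'`, average rewards `η = πf`,
`η' = π'f'`, and `g` a solution of the Poisson equation `Qg = η·1 − f`,
we have `η' − η = π'[(Q' − Q)g + (f' − f)]`. -/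
theorem stmt_4 {n : ℕ} (Q Q' : Matrix (Fin n) (Fin n) ℝ)
    (hQ : IsIrreducibleGenerator Q) (hQ' : IsIrreducibleGenerator Q')
    (π π' : Fin n → ℝ)
    (hπ : Matrix.vecMul π Q = 0) (hπ1 : ∑ i, π i = 1) (hπpos : ∀ i, 0 ≤ π i)
    (hπ' : Matrix.vecMul π' Q' = 0) (hπ'1 : ∑ i, π' i = 1)
    (hπ'pos : ∀ i, 0 ≤ π' i)
    (f f' : Fin n → ℝ) (η η' : ℝ) (hη : η = ∑ i, π i * f i)
    (hη' : η' = ∑ i, π' i * f' i)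
    (g : Fin n → ℝ) (hg : Q.mulVec g = fun i => η - f i) :
    η' - η = ∑ i, π' i * ((∑ j, (Q' i j - Q i j) * g j) + (f' i - f i)) := by
  have h1 : ∑ i, π' i * ∑ j, Q' i j * g j = 0 := by
    have := congrFun hπ'
    simp only [Matrix.vecMul, dotProduct, Pi.zero_apply] at this
    calc ∑ i, π' i * ∑ j, Q' i j * g j
        = ∑ j, (∑ i, π' i * Q' i j) * g j := by
          simp only [Finset.mul_sum, Finset.sum_mul, mul_assoc]
          exact Finset.sum_comm ..
      _ = 0 := by simp [this]
  have h2 : ∑ i, π' i * ∑ j, Q i j * g j = η - ∑ i, π' i * f i := by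
    have hgi : ∀ i, ∑ j, Q i j * g j = η - f i := by
      intro i
      have := congrFun hg i
      simpa [Matrix.mulVec, dotProduct] using this
    simp only [hgi, mul_sub]
    rw [Finset.sum_sub_distrib, ← Finset.sum_mul, hπ'1, one_mul]
  simp only [sub_mul, mul_add, mul_sub, Finset.sum_sub_distrib, Finset.sum_add_distrib]
  rw [h1, h2, hη']
  ring
end

section
/- Let Q be an irreducible generator on a finite state space partitioned into levels 0,1,...,K with block structure: Q has blocks Q_{k,k} on the diagonal, B_k = Q_{k,k+1} on the superdiagonal, Q_{k,0} in the first block column, and zeros elsewhere. Define D₀ = I and D_k = B_{k−1}(−Q_{k,k})^{−1} for k ≥ 1 (assuming each Q_{k,k} is invertible). Then the stationary distribution π = (π₀,...,π_K) satisfies π_k = π₀ · D₁D₂⋯D_k for each k ≥ 1. -/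
open Finset Matrix

/-- Matrix-product form of the stationary distribution of a block-structured
generator (levels `0,…,K`, diagonal blocks `Qd k`, superdiagonal blocks `B k`,
return blocks to level 0): with `D₀ = I`, `D_k = B_{k-1}(−Q_{k,k})⁻¹`, the
stationary probability vector satisfies `π_k = π₀ D₁⋯D_k`, expressed via the
sequence `w` with `w 0 = π₀` and `w (k+1) = w k · D_{k+1}`.  The block
stationarity equations `π_k B_k + π_{k+1} Q_{k+1,k+1} = 0` (superdiagonal
columns) and `∑_k π_k Q_{k,0} = 0` (level-0 column), together with
nonnegativity and normalization, encode `πQ = 0`, `π1 = 1`. -/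
theorem stmt_7 (K : ℕ) (d : ℕ → ℕ)
    (Qd : ∀ k, Matrix (Fin (d k)) (Fin (d k)) ℝ)
    (B : ∀ k, Matrix (Fin (d k)) (Fin (d (k + 1))) ℝ)
    (Q0 : ∀ k, Matrix (Fin (d k)) (Fin (d 0)) ℝ)
    (π : ∀ k, Fin (d k) → ℝ)
    (hQ00 : Q0 0 = Qd 0)
    (hπpos : ∀ k, k ≤ K → ∀ i, 0 ≤ π k i)
    (hnorm : ∑ k ∈ Finset.range (K + 1), ∑ i, π k i = 1)
    (hbal0 : ∑ k ∈ Finset.range (K + 1), Matrix.vecMul (π k) (Q0 k) = 0)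
    (hbal : ∀ k, k + 1 ≤ K →
      Matrix.vecMul (π k) (B k) + Matrix.vecMul (π (k + 1)) (Qd (k + 1)) = 0)
    (hinv : ∀ k, k + 1 ≤ K → IsUnit (Qd (k + 1)).det)
    (w : ∀ k, Fin (d k) → ℝ)
    (hw0 : w 0 = π 0)
    (hws : ∀ k, w (k + 1) = Matrix.vecMul (w k) (B k * (-(Qd (k + 1)))⁻¹)) :
    ∀ k, k ≤ K → π k = w k := by
  intro k
  induction k with
  | zero => intro _; exact hw0.symm
  | succ n ih =>
    intro hk
    have hπn : π n = w n := ih (Nat.le_of_succ_le hk)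
    have hb := hbal n hk
    have hdet : IsUnit (-(Qd (n + 1))).det := by
      rw [Matrix.det_neg]
      exact (isUnit_one.neg.pow _).mul (hinv n hk)
    have hBn : Matrix.vecMul (π n) (B n)
        = Matrix.vecMul (π (n + 1)) (-(Qd (n + 1))) := by
      rw [Matrix.vecMul_neg]
      have : Matrix.vecMul (π n) (B n) = -(Matrix.vecMul (π (n + 1)) (Qd (n + 1))) := by
        rw [← add_eq_zero_iff_eq_neg]; exact hb
      exact this
    rw [hws n, ← hπn, ← Matrix.vecMul_vecMul, hBn, Matrix.vecMul_vecMul,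
      Matrix.mul_nonsing_inv _ hdet, Matrix.vecMul_one]
end
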